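/- If a sofic shift X satisfies Condition (*), then every vertex of the past set cover lying in an essential (every vertex emits and receives an edge) subgraph is a vertex of the left Krieger cover, i.e., is the predecessor set of some right-ray. -/

import Mathlib

/-- The shift map on bi-infinite sequences. -/
def shiftZ {A : Type*} (p : ℤ → A) : ℤ → A := fun i => p (i + 1)

/-- Concatenation `y⁻x⁺` of a left-ray `y` (where `y 0` is the symbol at position `-1`,
`y 1` at position `-2`, …) and a right-ray `x` (where `x n` is the symbol at position `n`). -/
def concat {A : Type*} (y x : ℕ → A) : ℤ → A :=
  fun i => if 0 ≤ i then x i.toNat else y (-(i + 1)).toNat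

/-- The set of right-rays `X⁺` of `X`. -/
def Xplus {A : Type*} (X : Set (ℤ → A)) : Set (ℕ → A) := {x | ∃ y, concat y x ∈ X}

/-- The set of left-rays `X⁻` of `X`. -/
def Xminus {A : Type*} (X : Set (ℤ → A)) : Set (ℕ → A) := {y | ∃ x, concat y x ∈ X}

/-- The predecessor set `P_∞(x⁺)` of a right-ray. -/
def Pray {A : Type*} (X : Set (ℤ → A)) (x : ℕ → A) : Set (ℕ → A) := {y | concat y x ∈ X}

/-- Append a finite word at the (right) end of a left-ray: the word sits closest to the origin. -/
def leftAppend {A : Type*} (y : ℕ → A) (w : List A) : ℕ → A :=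
  fun n => if h : n < w.length then w.reverse.get ⟨n, by simpa using h⟩ else y (n - w.length)

/-- The predecessor set `P_∞(w)` of a finite word: left-rays `y⁻` with `y⁻w ∈ X⁻`. -/
def Pword {A : Type*} (X : Set (ℤ → A)) (w : List A) : Set (ℕ → A) :=
  {y | leftAppend y w ∈ Xminus X}

/-- The prefix `x₁…x_k` of a right-ray. -/
def rayPrefix {A : Type*} (x : ℕ → A) (k : ℕ) : List A := List.ofFn (fun i : Fin k => x i)

/-- `X` is a shift space: it is cut out by a set of forbidden words. -/
def IsShiftSpace {A : Type*} (X : Set (ℤ → A)) : Prop :=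
  ∃ F : Set (List A),
    X = {p : ℤ → A | ∀ (i : ℤ) (n : ℕ), (List.ofFn fun j : Fin n => p (i + j)) ∉ F}

/-- The language `B(X)` of `X`: words occurring (at position 0) in some point of `X`. -/
def Blang {A : Type*} (X : Set (ℤ → A)) : Set (List A) :=
  {w | ∃ p ∈ X, ∀ i : Fin w.length, p (i : ℕ) = w.get i}

/-- Prepend a finite word to a right-ray. -/
def wordRay {A : Type*} (w : List A) (x : ℕ → A) : ℕ → A :=
  fun n => if h : n < w.length then w.get ⟨n, h⟩ else x (n - w.length)

/-- `P_l(w)`: words of length at most `l` which can precede the word `w`. -/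
def Pl {A : Type*} (X : Set (ℤ → A)) (l : ℕ) (w : List A) : Set (List A) :=
  {v | v.length ≤ l ∧ (v ++ w) ∈ Blang X}

/-- `P_l(x⁺)`: words of length at most `l` which can precede the right-ray `x⁺`. -/
def PlRay {A : Type*} (X : Set (ℤ → A)) (l : ℕ) (x : ℕ → A) : Set (List A) :=
  {v | v.length ≤ l ∧ wordRay v x ∈ Xplus X}

/-- Condition (*) of Carlsen and Matsumoto. -/
def CondStar {A : Type*} (X : Set (ℤ → A)) : Prop :=
  ∀ (l : ℕ) (F : Set (List A)), F ⊆ Blang X → F.Infinite →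
    (∀ u ∈ F, ∀ v ∈ F, Pl X l u = Pl X l v) →
    ∃ x ∈ Xplus X, ∀ w ∈ F, Pl X l w = PlRay X l x

/-- The vertex set of the past set cover: predecessor sets of words of `X`. -/
def PscV {A : Type*} (X : Set (ℤ → A)) : Set (Set (ℕ → A)) :=
  {P | ∃ w ∈ Blang X, P = Pword X w}

/-- The edge labelled `a` from `P` to `Q` in the past set cover. -/
def PscEdge {A : Type*} (X : Set (ℤ → A)) (a : A) (P Q : Set (ℕ → A)) : Prop :=
  ∃ w ∈ Blang X, (a :: w) ∈ Blang X ∧ Pword X (a :: w) = P ∧ Pword X w = Q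

/-- An essential subgraph of the past set cover: a set of vertices each of which emits an edge
into the set and receives an edge from the set. -/
def EssentialSub {A : Type*} (X : Set (ℤ → A)) (H : Set (Set (ℕ → A))) : Prop :=
  H ⊆ PscV X ∧ ∀ P ∈ H,
    (∃ (a : A) (Q : Set (ℕ → A)), Q ∈ H ∧ PscEdge X a P Q) ∧
    (∃ (a : A) (Q : Set (ℕ → A)), Q ∈ H ∧ PscEdge X a Q P)

/-!
A vertex `P` of an essential subgraph emits an edge `a` to a vertex of the subgraph, and `a`
prepended to any word representing the target represents `P` again. Iterating, `P = P_∞(w)` for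
words `w` of unbounded length, hence for infinitely many words. These all share `P_m(w)`, so
Condition (*) yields a right-ray `x⁺` with `P_m(x⁺) = P_m(w)`, and the choice of `m` upgrades
this to `P_∞(x⁺) = P_∞(w) = P`.
-/

section ShiftSpace

variable {A : Type*} {X : Set (ℤ → A)}

theorem IsShiftSpace.comp_add_mem (hX : IsShiftSpace X) {p : ℤ → A} (hp : p ∈ X) (k : ℤ) :
    (fun i => p (i + k)) ∈ X := by
  obtain ⟨F, rfl⟩ := hX
  intro i n
  simpa only [add_right_comm] using hp (i + k) n

theorem concat_left_right (p : ℤ → A) :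
    concat (fun n => p (-(n : ℤ) - 1)) (fun n => p n) = p := by
  funext i
  dsimp only [concat]
  split_ifs <;> congr 1 <;> omega

theorem leftAppend_cons (y : ℕ → A) (a : A) (u : List A) :
    leftAppend y (a :: u) = leftAppend (leftAppend y [a]) u := by
  funext n
  simp only [leftAppend, List.length_cons, List.reverse_cons, List.get_eq_getElem]
  rcases lt_trichotomy n u.length with h | rfl | h
  · rw [dif_pos (by omega), dif_pos h, List.getElem_append_left (by simpa using h)]
  · simp
  · rw [dif_neg (by omega), dif_neg (by omega), dif_neg (by simp; omega)]
    congr 1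

theorem concat_leftAppend_sub_length (y x : ℕ → A) (w : List A) {i : ℕ} (hi : i < w.length) :
    concat (leftAppend y w) x (i - w.length) = w[i] := by
  have hpos : (-((i : ℤ) - w.length + 1)).toNat = w.length - 1 - i := by omega
  simp only [concat, leftAppend, if_neg (show ¬(0 : ℤ) ≤ i - w.length by omega), hpos,
    dif_pos (show w.length - 1 - i < w.length by omega), List.get_eq_getElem,
    List.getElem_reverse]
  congr 1
  omega

theorem mem_Pword_cons {y : ℕ → A} {a : A} {u : List A} :
    y ∈ Pword X (a :: u) ↔ leftAppend y [a] ∈ Pword X u :=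
  Iff.of_eq (congrArg (· ∈ Xminus X) (leftAppend_cons y a u))

theorem Pword_cons_congr {u v : List A} (a : A) (h : Pword X u = Pword X v) :
    Pword X (a :: u) = Pword X (a :: v) := by
  ext y
  rw [mem_Pword_cons, mem_Pword_cons, h]

theorem IsShiftSpace.mem_Blang_iff_Pword_nonempty (hX : IsShiftSpace X) {w : List A} :
    w ∈ Blang X ↔ (Pword X w).Nonempty := by
  constructor
  · rintro ⟨p, hp, hpw⟩
    -- shifting `p` by `|w|` places `w` immediately left of the origin
    have hshift : leftAppend (fun n => p (-(n : ℤ) - 1)) w =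
        fun n : ℕ => p (-(n : ℤ) - 1 + w.length) := by
      funext n
      simp only [leftAppend, List.get_eq_getElem, List.getElem_reverse]
      split_ifs with hn
      · have hpn := hpw ⟨w.length - 1 - n, by omega⟩
        rw [List.get_eq_getElem] at hpn
        rw [← hpn]
        congr 1
        simp only
        omega
      · congr 1
        omega
    refine ⟨fun n => p (-(n : ℤ) - 1), fun n => p (n + w.length), ?_⟩
    rw [hshift]
    simpa only [← concat_left_right (fun i => p (i + w.length)), add_comm] using
      hX.comp_add_mem hp w.length
  · rintro ⟨y, x, hx⟩
    refine ⟨_, hX.comp_add_mem hx (-(w.length : ℤ)), fun i => ?_⟩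
    simpa only [← sub_eq_add_neg, List.get_eq_getElem] using
      concat_leftAppend_sub_length y x w i.2

namespace EssentialSub

variable {H : Set (Set (ℕ → A))}

theorem exists_Pword_eq_le_length (hH : EssentialSub X H) (k : ℕ) :
    ∀ Q ∈ H, ∃ w : List A, Pword X w = Q ∧ k ≤ w.length := by
  induction k with
  | zero =>
    intro Q hQ
    obtain ⟨w, -, rfl⟩ := hH.1 hQ
    exact ⟨w, rfl, Nat.zero_le _⟩
  | succ k ih =>
    intro Q hQ
    obtain ⟨a, S, hS, w, -, -, rfl, rfl⟩ := (hH.2 Q hQ).1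
    obtain ⟨u, hu, hlen⟩ := ih _ hS
    exact ⟨a :: u, Pword_cons_congr a hu, by simpa using hlen⟩

theorem infinite_setOf_Pword_eq (hX : IsShiftSpace X) (hH : EssentialSub X H) {P : Set (ℕ → A)}
    (hP : P ∈ H) : {w | w ∈ Blang X ∧ Pword X w = P}.Infinite := by
  obtain ⟨w₀, hw₀, rfl⟩ := hH.1 hP
  have hmem : ∀ w, Pword X w = Pword X w₀ → w ∈ Blang X := fun w hw =>
    hX.mem_Blang_iff_Pword_nonempty.2 (hw ▸ hX.mem_Blang_iff_Pword_nonempty.1 hw₀)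
  refine Set.Infinite.of_image List.length (Set.infinite_of_forall_exists_gt fun k => ?_)
  obtain ⟨w, hw, hlen⟩ := hH.exists_Pword_eq_le_length (k + 1) _ hP
  exact ⟨w.length, ⟨w, ⟨hmem w hw, hw⟩, rfl⟩, hlen⟩

end EssentialSub

theorem CondStar.exists_Pray_eq (hstar : CondStar X) {m : ℕ}
    (hm_word : ∀ u v, u ∈ Blang X → v ∈ Blang X →
      Pword X u = Pword X v → Pl X m u = Pl X m v)
    (hm_ray : ∀ w ∈ Blang X, ∀ x ∈ Xplus X, Pl X m w = PlRay X m x → Pword X w = Pray X x)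
    {P : Set (ℕ → A)} (hP : {w | w ∈ Blang X ∧ Pword X w = P}.Infinite) :
    ∃ x ∈ Xplus X, Pray X x = P := by
  obtain ⟨x, hx, hxF⟩ := hstar m _ (fun w hw => hw.1) hP fun u hu v hv =>
    hm_word u v hu.1 hv.1 (hu.2.trans hv.2.symm)
  obtain ⟨w, hw, rfl⟩ := hP.nonempty
  exact ⟨x, hx, (hm_ray w hw x hx (hxF w ⟨hw, rfl⟩)).symm⟩

end ShiftSpace

theorem stmt13_general {A : Type*} (X : Set (ℤ → A)) (hX : IsShiftSpace X)
    (hm : ∃ m : ℕ,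
      (∀ u v : List A, u ∈ Blang X → v ∈ Blang X →
        (Pl X m u = Pl X m v ↔ Pword X u = Pword X v)) ∧
      (∀ w ∈ Blang X, ∀ x ∈ Xplus X, (Pl X m w = PlRay X m x ↔ Pword X w = Pray X x)) ∧
      (∀ x ∈ Xplus X, ∀ y ∈ Xplus X, (PlRay X m x = PlRay X m y ↔ Pray X x = Pray X y)))
    (hstar : CondStar X) :
    ∀ P : Set (ℕ → A), (∃ H, EssentialSub X H ∧ P ∈ H) →
      ∃ x ∈ Xplus X, Pray X x = P := by
  rintro P ⟨H, hH, hP⟩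
  obtain ⟨m, hm_word, hm_ray, -⟩ := hm
  exact hstar.exists_Pray_eq (fun u v hu hv => (hm_word u v hu hv).2)
    (fun w hw x hx => (hm_ray w hw x hx).1) (hH.infinite_setOf_Pword_eq hX hP)

/-- If a sofic shift `X` satisfies Condition (*), then every vertex of the past
set cover lying in an essential subgraph is a vertex of the left Krieger cover, i.e. the
predecessor set of some right-ray. -/
theorem stmt13 {A : Type*} (X : Set (ℤ → A)) (hX : IsShiftSpace X)
    (hsofic : {P : Set (ℕ → A) | ∃ w : List A, P = Pword X w}.Finite)
    (hm : ∃ m : ℕ,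
      (∀ u v : List A, u ∈ Blang X → v ∈ Blang X →
        (Pl X m u = Pl X m v ↔ Pword X u = Pword X v)) ∧
      (∀ w ∈ Blang X, ∀ x ∈ Xplus X, (Pl X m w = PlRay X m x ↔ Pword X w = Pray X x)) ∧
      (∀ x ∈ Xplus X, ∀ y ∈ Xplus X, (PlRay X m x = PlRay X m y ↔ Pray X x = Pray X y)))
    (hstar : CondStar X) :
    ∀ P : Set (ℕ → A), (∃ H, EssentialSub X H ∧ P ∈ H) →
      ∃ x ∈ Xplus X, Pray X x = P :=
  stmt13_general X hX hm hstar
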